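/- Let B = kQ/⟨R⟩_Q be a bound quiver algebra and α : Q₀ × Q₀ → ℕ. The algebra B^α = kQ^α/⟨R⟩_{Q^α} is finite dimensional if and only if the lengths of relative paths are bounded, which in turn is equivalent to the nonexistence of relative cycles. -/

import Mathlib

/-!
STATEMENT 13: Let B = kQ/⟨R⟩_Q be a bound quiver algebra and α : Q₀ × Q₀ → ℕ. The algebra
B^α = kQ^α/⟨R⟩_{Q^α} is finite dimensional if and only if the lengths of relative paths are
bounded, which in turn is equivalent to the nonexistence of relative cycles.
-/

open scoped TensorProduct
noncomputable section

/-- A finite quiver: a finite set of vertices, a finite set of arrows,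
and source and target maps. -/
structure QuiverData : Type 1 where
  V : Type
  E : Type
  [fV : Fintype V]
  [fE : Fintype E]
  [dV : DecidableEq V]
  [dE : DecidableEq E]
  s : E → V
  t : E → V

attribute [instance] QuiverData.fV QuiverData.fE QuiverData.dV QuiverData.dE

variable (K : Type) [Field K]

/-- The free algebra on the vertices and arrows of a quiver. -/
abbrev FA (Q : QuiverData) : Type := FreeAlgebra K (Q.V ⊕ Q.E)

/-- The generator corresponding to a vertex. -/
def QuiverData.vtx (Q : QuiverData) (i : Q.V) : FA K Q := FreeAlgebra.ι K (Sum.inl i)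
/-- The generator corresponding to an arrow. -/
def QuiverData.arr (Q : QuiverData) (a : Q.E) : FA K Q := FreeAlgebra.ι K (Sum.inr a)

/-- The relations presenting the quotient `kQ/⟨R⟩` of the path algebra `kQ` of the quiver `Q`
by the two-sided ideal generated by a set `R`: vertices are orthogonal idempotents summing
to `1`, and arrows are composable with their source and target vertices; the elements of `R`
are set to zero.  (`kQ` itself is the case `R = ∅`.) -/
inductive PathRel (Q : QuiverData) (R : Set (FA K Q)) : FA K Q → FA K Q → Prop
  | vtx_mul (i j : Q.V) : PathRel Q R (Q.vtx K i * Q.vtx K j) (if i = j then Q.vtx K i else 0)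
  | vtx_sum : PathRel Q R (∑ i : Q.V, Q.vtx K i) 1
  | arr_t (a : Q.E) : PathRel Q R (Q.vtx K (Q.t a) * Q.arr K a) (Q.arr K a)
  | arr_s (a : Q.E) : PathRel Q R (Q.arr K a * Q.vtx K (Q.s a)) (Q.arr K a)
  | rel (r : FA K Q) (hr : r ∈ R) : PathRel Q R r 0

/-- The algebra `kQ/⟨R⟩_Q`. -/
abbrev BQA (Q : QuiverData) (R : Set (FA K Q)) : Type := RingQuot (PathRel K Q R)

/-- The canonical projection onto `kQ/⟨R⟩_Q`. -/
def BQA.mk (Q : QuiverData) (R : Set (FA K Q)) : FA K Q →ₐ[K] BQA K Q R :=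
  RingQuot.mkAlgHom K _

/-- The idempotent of `kQ/⟨R⟩_Q` given by a vertex. -/
def vtxIdem (Q : QuiverData) (R : Set (FA K Q)) (i : Q.V) : BQA K Q R :=
  BQA.mk K Q R (Q.vtx K i)

/-- A sequence of arrows is composable if the source of each arrow is the target of
the previous one.  (`c i` is the `i`-th arrow traversed.) -/
def Composable (Q : QuiverData) {n : ℕ} (c : Fin n → Q.E) : Prop :=
  ∀ (i : ℕ) (h : i + 1 < n), Q.s (c ⟨i+1, h⟩) = Q.t (c ⟨i, Nat.lt_of_succ_lt h⟩)

/-- The element of the free algebra given by a path `aₙ ⋯ a₁`: the ordered product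
of its arrows. -/
def chainWord (Q : QuiverData) {n : ℕ} (c : Fin n → Q.E) : FA K Q :=
  ((List.ofFn c).reverse.map (Q.arr K)).prod

/-- The set of paths of length at least `2`, inside the free algebra. -/
def lenTwoWords (Q : QuiverData) : Set (FA K Q) :=
  {w | ∃ (n : ℕ), 2 ≤ n ∧ ∃ c : Fin n → Q.E, Composable Q c ∧ w = chainWord K Q c}

/-- `R ⊆ ⟨Q₂⟩`: the elements of `R` are linear combinations of paths of length at least 2. -/
def RelationsOK (Q : QuiverData) (R : Set (FA K Q)) : Prop :=
  R ⊆ (Submodule.span K (lenTwoWords K Q) : Submodule K (FA K Q))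

/-- The ideal `⟨R⟩_Q` is admissible: all long enough paths vanish in `kQ/⟨R⟩_Q`, i.e.
`⟨Qₙ⟩ ⊆ ⟨R⟩_Q` for some `n`. -/
def Admissible (Q : QuiverData) (R : Set (FA K Q)) : Prop :=
  ∃ m : ℕ, ∀ n, m ≤ n → ∀ c : Fin n → Q.E, Composable Q c → BQA.mk K Q R (chainWord K Q c) = 0

/-- `Q` together with `R` presents a bound quiver algebra. -/
def BoundQuiverAlgebra (Q : QuiverData) (R : Set (FA K Q)) : Prop :=
  R.Finite ∧ RelationsOK K Q R ∧ Admissible K Q R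

/-- The quiver `Q⁺`, obtained from `Q` by adding one new arrow from `e` to `f`. -/
def QuiverData.plus (Q : QuiverData) (e f : Q.V) : QuiverData where
  V := Q.V
  E := Q.E ⊕ Unit
  s := Sum.elim Q.s (fun _ => e)
  t := Sum.elim Q.t (fun _ => f)

/-- The inclusion of the free algebra of `Q` into that of `Q⁺`. -/
def inclFA (Q : QuiverData) (e f : Q.V) : FA K Q →ₐ[K] FA K (Q.plus e f) :=
  FreeAlgebra.lift K (fun x => FreeAlgebra.ι K (Sum.map id Sum.inl x))

/-- The algebra `B⁺ = kQ⁺/⟨R⟩_{Q⁺}`. -/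
abbrev BQAplus (Q : QuiverData) (R : Set (FA K Q)) (e f : Q.V) : Type :=
  BQA K (Q.plus e f) (inclFA K Q e f '' R)

section Alpha
variable (Q : QuiverData) (α : Q.V → Q.V → ℕ)

/-- The new arrows added to `Q` by the map `α`: there are `α f e` new arrows
from `e` to `f`. -/
def NewArrow : Type := Σ f : Q.V, Σ e : Q.V, Fin (α f e)

instance : Fintype (NewArrow Q α) := inferInstanceAs (Fintype (Σ f : Q.V, Σ e : Q.V, Fin (α f e)))
instance : DecidableEq (NewArrow Q α) :=
  inferInstanceAs (DecidableEq (Σ f : Q.V, Σ e : Q.V, Fin (α f e)))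

/-- Source vertex of a new arrow. -/
def NewArrow.src (a : NewArrow Q α) : Q.V := a.2.1
/-- Target vertex of a new arrow. -/
def NewArrow.tgt (a : NewArrow Q α) : Q.V := a.1

/-- The quiver `Q^α`, obtained from `Q` by adding `α f e` new arrows from `e` to `f`
for each pair of vertices. -/
def QuiverData.alpha : QuiverData where
  V := Q.V
  E := Q.E ⊕ NewArrow Q α
  s := Sum.elim Q.s (fun a => a.src)
  t := Sum.elim Q.t (fun a => a.tgt)

/-- The inclusion of the free algebra of `Q` into that of `Q^α`. -/
def inclFAalpha : FA K Q →ₐ[K] FA K (Q.alpha α) :=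
  FreeAlgebra.lift K (fun x => FreeAlgebra.ι K (Sum.map id Sum.inl x))

/-- The algebra `B^α = kQ^α/⟨R⟩_{Q^α}`. -/
abbrev BQAalpha (R : Set (FA K Q)) : Type := BQA K (Q.alpha α) (inclFAalpha K Q α '' R)

variable (R : Set (FA K Q))

/-- A pair of new arrows `(a₂, a₁)` is linked if `s(a₂)·B·t(a₁) ≠ 0`. -/
def Linked (a₂ a₁ : NewArrow Q α) : Prop :=
  ∃ b : BQA K Q R, vtxIdem K Q R a₂.src * b * vtxIdem K Q R a₁.tgt ≠ 0

/-- A relative path of length `n + 1`: a sequence of `n + 1` new arrows, consecutively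
linked.  (`arr 0` is the first arrow `a₁` of the relative path `aₙ₊₁ ⋯ a₁`.) -/
structure RelPath (n : ℕ) where
  arr : Fin (n+1) → NewArrow Q α
  linked : ∀ i : Fin n, Linked K Q α R (arr i.succ) (arr i.castSucc)

/-- The source vertex of a relative path. -/
def RelPath.src {n : ℕ} (γ : RelPath K Q α R n) : Q.V := (γ.arr 0).src
/-- The target vertex of a relative path. -/
def RelPath.tgt {n : ℕ} (γ : RelPath K Q α R n) : Q.V := (γ.arr (Fin.last n)).tgt

/-- The corner subspace `x·B·y` of `B`. -/
def corner (x y : Q.V) : Submodule K (BQA K Q R) :=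
  Submodule.span K {z | ∃ b : BQA K Q R, z = vtxIdem K Q R x * b * vtxIdem K Q R y}

/-- `dim_k γ = ∏ dim_k (s(a_{i+1})·B·t(a_i))` for a relative path `γ`;
it is `1` for relative paths of length one. -/
def RelPath.dimk {n : ℕ} (γ : RelPath K Q α R n) : ℕ :=
  ∏ i : Fin n, Module.finrank K (corner K Q R (γ.arr i.succ).src (γ.arr i.castSucc).tgt)

/-- A relative path is a relative cycle if moreover `(a₁, aₙ₊₁)` is linked. -/
def RelPath.IsCycle {n : ℕ} (γ : RelPath K Q α R n) : Prop :=
  Linked K Q α R (γ.arr 0) (γ.arr (Fin.last n))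

end Alpha

/-
`B^α` is spanned by the products `b₀ aₖ b₁ ⋯ a₁ bₖ` with `bᵢ ∈ B` and new arrows `aᵢ`, and such a
product vanishes as soon as two consecutive arrows are not linked. Hence `B^α` is the sum of the
subspaces `B aₖ B ⋯ B a₁ B` over the relative paths `aₖ ⋯ a₁`; each of them is finite dimensional
because `B` is, by admissibility, so bounded lengths give finite dimension.

Conversely, a relative path `aₙ ⋯ a₀` with linking witnesses `bᵢ` yields `n + 1` linearly
independent elements `aⱼ bⱼ₋₁ ⋯ b₀ a₀`. They are separated by a representation of `B^α` on
`B^{n+2}`: `B` acts diagonally and `aⱼ` moves slot `j` to slot `j + 1` through a linear form that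
is `1` on `e_{s(aⱼ)} bⱼ₋₁ e_{t(aⱼ₋₁)} ≠ 0`, so the `j`-th element sends `e_{s(a₀)}` in slot `0` to
`e_{t(aⱼ)}` in slot `j + 1`. Vertex idempotents are nonzero because `R ⊆ ⟨Q₂⟩` lets the
augmentation `kQ → k^{Q₀}` descend to `B`.

Finally, winding around a relative cycle gives relative paths of every length, while a relative
path longer than the number of new arrows repeats an arrow and therefore contains a cycle.
-/

theorem Submodule.eq_top_of_adjoin_eq_top {R A : Type*} [CommSemiring R] [Semiring A]
    [Algebra R A] {s : Set A} (hs : Algebra.adjoin R s = ⊤) {P : Submodule R A}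
    (hsP : s ⊆ P) (h1 : 1 ∈ P) (hmul : P * P ≤ P) : P = ⊤ :=
  eq_top_iff.2 fun _ _ =>
    Algebra.adjoin_le (S := P.toSubalgebra h1 fun _ _ hx hy => hmul (mul_mem_mul hx hy)) hsP
      (hs ▸ Algebra.mem_top)

section Presentation

variable {K : Type} [Field K] (Q : QuiverData) (R : Set (FA K Q))

def arrClass (a : Q.E) : BQA K Q R := BQA.mk K Q R (Q.arr K a)

theorem mk_eq_of_pathRel {x y : FA K Q} (h : PathRel K Q R x y) :
    BQA.mk K Q R x = BQA.mk K Q R y :=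
  RingQuot.mkAlgHom_rel K h

theorem mk_eq_zero_of_mem {r : FA K Q} (hr : r ∈ R) : BQA.mk K Q R r = 0 := by
  simpa using mk_eq_of_pathRel Q R (PathRel.rel r hr)

theorem vtxIdem_mul_vtxIdem (i j : Q.V) :
    vtxIdem K Q R i * vtxIdem K Q R j = if i = j then vtxIdem K Q R i else 0 := by
  simpa [vtxIdem, apply_ite (BQA.mk K Q R)] using mk_eq_of_pathRel Q R (PathRel.vtx_mul i j)

theorem vtxIdem_mul_self (i : Q.V) : vtxIdem K Q R i * vtxIdem K Q R i = vtxIdem K Q R i := by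
  simp [vtxIdem_mul_vtxIdem]

theorem sum_vtxIdem : ∑ i : Q.V, vtxIdem K Q R i = 1 := by
  simpa [vtxIdem] using mk_eq_of_pathRel Q R (PathRel.vtx_sum (K := K))

theorem vtxIdem_mul_arrClass (a : Q.E) :
    vtxIdem K Q R (Q.t a) * arrClass Q R a = arrClass Q R a := by
  simpa [vtxIdem, arrClass] using mk_eq_of_pathRel Q R (PathRel.arr_t a)

theorem arrClass_mul_vtxIdem (a : Q.E) :
    arrClass Q R a * vtxIdem K Q R (Q.s a) = arrClass Q R a := by
  simpa [vtxIdem, arrClass] using mk_eq_of_pathRel Q R (PathRel.arr_s a)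

theorem adjoin_range_mk_ι :
    Algebra.adjoin K (Set.range fun x => BQA.mk K Q R (FreeAlgebra.ι K x)) = ⊤ := by
  rw [Set.range_comp', Algebra.adjoin_image, FreeAlgebra.adjoin_range_ι, Algebra.map_top,
    AlgHom.range_eq_top]
  exact RingQuot.mkAlgHom_surjective K _

end Presentation

section Words

variable {K : Type} [Field K] (Q : QuiverData) (R : Set (FA K Q))

def wordClass (l : List Q.E) : BQA K Q R := (l.map (arrClass Q R)).prod

theorem wordClass_append (l₁ l₂ : List Q.E) :
    wordClass Q R (l₁ ++ l₂) = wordClass Q R l₁ * wordClass Q R l₂ := by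
  simp [wordClass]

theorem wordClass_eq_zero_of_not_isChain {l : List Q.E}
    (h : ¬ l.IsChain fun a b => Q.s a = Q.t b) : wordClass Q R l = 0 := by
  induction l with
  | nil => exact absurd List.isChain_nil h
  | cons a l ih =>
    rcases l with _ | ⟨b, l⟩
    · exact absurd (List.isChain_singleton a) h
    rw [List.isChain_cons_cons, not_and_or] at h
    rcases h with hab | hl
    · have : arrClass Q R a * arrClass Q R b = 0 := by
        rw [← arrClass_mul_vtxIdem, ← vtxIdem_mul_arrClass Q R b, mul_assoc,
          ← mul_assoc (vtxIdem K Q R _), vtxIdem_mul_vtxIdem, if_neg hab, zero_mul, mul_zero]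
      simp [wordClass, ← mul_assoc, this]
    · have := ih hl
      simp only [wordClass, List.map_cons, List.prod_cons] at this ⊢
      rw [this, mul_zero]

theorem mk_chainWord {n : ℕ} (c : Fin n → Q.E) :
    BQA.mk K Q R (chainWord K Q c) = wordClass Q R (List.ofFn c).reverse := by
  simp [chainWord, wordClass, map_list_prod, arrClass, Function.comp_def]

theorem Admissible.exists_wordClass_eq_zero (h : Admissible K Q R) :
    ∃ m, ∀ l : List Q.E, m ≤ l.length → wordClass Q R l = 0 := by
  obtain ⟨m, hm⟩ := h
  refine ⟨m, fun l hl => ?_⟩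
  by_cases hl' : l.IsChain fun a b => Q.s a = Q.t b
  · have hc : Composable Q l.reverse.get := fun i hi => by
      have := List.isChain_iff_getElem.1 (List.isChain_reverse.2 hl') i (by simpa using hi)
      simpa using this
    have := hm _ (by simpa using hl) _ hc
    rwa [mk_chainWord, List.ofFn_get, List.reverse_reverse] at this
  · exact wordClass_eq_zero_of_not_isChain Q R hl'

theorem vtxIdem_mul_wordClass_cons (v : Q.V) (a : Q.E) (l : List Q.E) :
    vtxIdem K Q R v * wordClass Q R (a :: l) =
      if v = Q.t a then wordClass Q R (a :: l) else 0 := by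
  have h : wordClass Q R (a :: l) = vtxIdem K Q R (Q.t a) * wordClass Q R (a :: l) := by
    simp [wordClass, ← mul_assoc, vtxIdem_mul_arrClass]
  rw [h, ← mul_assoc, vtxIdem_mul_vtxIdem]
  split_ifs with hv
  exacts [by rw [hv], zero_mul _]

theorem wordClass_concat_mul_vtxIdem (v : Q.V) (a : Q.E) (l : List Q.E) :
    wordClass Q R (l ++ [a]) * vtxIdem K Q R v =
      if Q.s a = v then wordClass Q R (l ++ [a]) else 0 := by
  have h : wordClass Q R (l ++ [a]) = wordClass Q R (l ++ [a]) * vtxIdem K Q R (Q.s a) := by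
    simp [wordClass, mul_assoc, arrClass_mul_vtxIdem]
  rw [h, mul_assoc, vtxIdem_mul_vtxIdem]
  split_ifs with hv
  exacts [by rw [hv], mul_zero _]

def shortPaths (N : ℕ) : Set (BQA K Q R) :=
  Set.range (vtxIdem K Q R) ∪ wordClass Q R '' {l | l.length ≤ N}

theorem span_shortPaths_mul_le {N : ℕ}
    (hN : ∀ l : List Q.E, N < l.length → wordClass Q R l = 0) :
    Submodule.span K (shortPaths Q R N) * Submodule.span K (shortPaths Q R N) ≤
      Submodule.span K (shortPaths Q R N) := by
  have hvtx (v : Q.V) : vtxIdem K Q R v ∈ shortPaths Q R N := Or.inl ⟨v, rfl⟩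
  have hword {l : List Q.E} (hl : l.length ≤ N) : wordClass Q R l ∈ shortPaths Q R N :=
    Or.inr ⟨l, hl, rfl⟩
  have hite {p : Prop} [Decidable p] {z : BQA K Q R} (hz : z ∈ shortPaths Q R N) :
      (if p then z else 0) ∈ Submodule.span K (shortPaths Q R N) := by
    split_ifs
    exacts [Submodule.subset_span hz, zero_mem _]
  rw [Submodule.span_mul_span, Submodule.span_le]
  rintro _ ⟨x, ⟨v, rfl⟩ | ⟨l₁, hl₁, rfl⟩, y, ⟨w, rfl⟩ | ⟨l₂, hl₂, rfl⟩, rfl⟩ <;>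
    dsimp only
  · rw [vtxIdem_mul_vtxIdem]; exact hite (hvtx v)
  · rcases l₂ with _ | ⟨a, l₂⟩
    · simpa [wordClass] using Submodule.subset_span (hvtx v)
    · rw [vtxIdem_mul_wordClass_cons]; exact hite (hword hl₂)
  · rcases List.eq_nil_or_concat' l₁ with rfl | ⟨l₁, a, rfl⟩
    · simpa [wordClass] using Submodule.subset_span (hvtx w)
    · rw [wordClass_concat_mul_vtxIdem]; exact hite (hword hl₁)
  · rw [← wordClass_append]
    by_cases hl : (l₁ ++ l₂).length ≤ N
    · exact Submodule.subset_span (hword hl)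
    · rw [hN _ (by omega)]; exact zero_mem _

theorem span_shortPaths_eq_top {N : ℕ} (hN₁ : 1 ≤ N)
    (hN : ∀ l : List Q.E, N < l.length → wordClass Q R l = 0) :
    Submodule.span K (shortPaths Q R N) = ⊤ := by
  refine Submodule.eq_top_of_adjoin_eq_top (adjoin_range_mk_ι Q R) ?_ ?_
    (span_shortPaths_mul_le Q R hN)
  · rintro _ ⟨v | a, rfl⟩
    · exact Submodule.subset_span (Or.inl ⟨v, rfl⟩)
    · refine Submodule.subset_span (Or.inr ⟨[a], hN₁, ?_⟩)
      simp [wordClass, arrClass, QuiverData.arr]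
  · rw [← sum_vtxIdem]
    exact sum_mem fun v _ => Submodule.subset_span (Or.inl ⟨v, rfl⟩)

theorem finiteDimensional_of_admissible (h : Admissible K Q R) :
    FiniteDimensional K (BQA K Q R) := by
  obtain ⟨m, hm⟩ := Admissible.exists_wordClass_eq_zero Q R h
  have hfin : (shortPaths Q R (m + 1)).Finite :=
    (Set.finite_range _).union ((List.finite_length_le _ _).image _)
  have htop := span_shortPaths_eq_top Q R (Nat.le_add_left 1 m) fun l hl => hm l (by omega)
  exact Module.finite_def.2 (htop ▸ Submodule.fg_span hfin)

end Words

section Augmentation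

def augmentationGen (K : Type) [Field K] (Q : QuiverData) : Q.V ⊕ Q.E → (Q.V → K) :=
  Sum.elim (fun v => Pi.single v 1) 0

variable {K : Type} [Field K] (Q : QuiverData) (R : Set (FA K Q))

theorem augmentationGen_rel (hR : RelationsOK K Q R) ⦃x y : FA K Q⦄ (h : PathRel K Q R x y) :
    FreeAlgebra.lift K (augmentationGen K Q) x = FreeAlgebra.lift K (augmentationGen K Q) y := by
  induction h with
  | vtx_mul i j =>
    split_ifs with hij
    · simp [QuiverData.vtx, augmentationGen, hij, ← Pi.single_mul]
    · simp [QuiverData.vtx, augmentationGen, ← Pi.single_mul_left, Pi.single_eq_of_ne hij]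
  | vtx_sum => simp [QuiverData.vtx, augmentationGen, Finset.univ_sum_single]; rfl
  | arr_t a | arr_s a => simp [QuiverData.arr, augmentationGen]
  | rel r hr =>
    rw [map_zero, ← AlgHom.toLinearMap_apply, ← LinearMap.mem_ker]
    refine Submodule.span_le.2 ?_ (hR hr)
    rintro _ ⟨n, hn, c, -, rfl⟩
    rw [SetLike.mem_coe, LinearMap.mem_ker, AlgHom.toLinearMap_apply, chainWord, map_list_prod]
    apply List.prod_eq_zero
    simp only [List.map_map, List.mem_map, List.mem_reverse, List.mem_ofFn]
    exact ⟨_, ⟨⟨0, by omega⟩, rfl⟩, by simp [QuiverData.arr, augmentationGen]⟩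

theorem vtxIdem_ne_zero (hR : RelationsOK K Q R) (v : Q.V) : vtxIdem K Q R v ≠ 0 := by
  intro h
  have := congr_arg (RingQuot.liftAlgHom K ⟨_, augmentationGen_rel Q R hR⟩) h
  simpa [vtxIdem, BQA.mk, QuiverData.vtx, augmentationGen] using congr_fun this v

end Augmentation

section Inclusion

variable {K : Type} [Field K] (Q : QuiverData) (α : Q.V → Q.V → ℕ) (R : Set (FA K Q))

theorem inclFAalpha_vtx (v : Q.V) : inclFAalpha K Q α (Q.vtx K v) = (Q.alpha α).vtx K v :=
  FreeAlgebra.lift_ι_apply _ _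

theorem inclFAalpha_arr (a : Q.E) :
    inclFAalpha K Q α (Q.arr K a) = (Q.alpha α).arr K (Sum.inl a) :=
  FreeAlgebra.lift_ι_apply _ _

theorem PathRel.map_inclFAalpha {x y : FA K Q} (h : PathRel K Q R x y) :
    PathRel K (Q.alpha α) (inclFAalpha K Q α '' R) (inclFAalpha K Q α x)
      (inclFAalpha K Q α y) := by
  induction h with
  | vtx_mul i j =>
    rw [map_mul, inclFAalpha_vtx, inclFAalpha_vtx, apply_ite (inclFAalpha K Q α), map_zero,
      inclFAalpha_vtx]
    exact PathRel.vtx_mul (K := K) (Q := Q.alpha α) i j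
  | vtx_sum =>
    rw [map_sum, map_one]
    simp only [inclFAalpha_vtx]
    exact PathRel.vtx_sum
  | arr_t a =>
    rw [map_mul, inclFAalpha_vtx, inclFAalpha_arr]
    exact PathRel.arr_t (Q := Q.alpha α) (Sum.inl a)
  | arr_s a =>
    rw [map_mul, inclFAalpha_vtx, inclFAalpha_arr]
    exact PathRel.arr_s (Q := Q.alpha α) (Sum.inl a)
  | rel r hr =>
    rw [map_zero]
    exact PathRel.rel _ ⟨r, hr, rfl⟩

def inclAlpha : BQA K Q R →ₐ[K] BQAalpha K Q α R :=
  RingQuot.liftAlgHom K ⟨(BQA.mk K _ _).comp (inclFAalpha K Q α),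
    fun _ _ h => mk_eq_of_pathRel _ _ (h.map_inclFAalpha Q α R)⟩

def newArrClass (a : NewArrow Q α) : BQAalpha K Q α R :=
  arrClass (Q.alpha α) (inclFAalpha K Q α '' R) (Sum.inr a)

theorem inclAlpha_mk (x : FA K Q) :
    inclAlpha Q α R (BQA.mk K Q R x) = BQA.mk K _ _ (inclFAalpha K Q α x) :=
  RingQuot.liftAlgHom_mkAlgHom_apply _ _ _ _

theorem inclAlpha_vtxIdem (v : Q.V) :
    inclAlpha Q α R (vtxIdem K Q R v) = vtxIdem K (Q.alpha α) (inclFAalpha K Q α '' R) v := by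
  rw [vtxIdem, inclAlpha_mk, inclFAalpha_vtx]
  rfl

theorem inclAlpha_arrClass (a : Q.E) :
    inclAlpha Q α R (arrClass Q R a) =
      arrClass (Q.alpha α) (inclFAalpha K Q α '' R) (Sum.inl a) := by
  rw [arrClass, inclAlpha_mk, inclFAalpha_arr]
  rfl

theorem vtxIdem_mul_newArrClass (a : NewArrow Q α) :
    vtxIdem K (Q.alpha α) (inclFAalpha K Q α '' R) a.tgt * newArrClass Q α R a =
      newArrClass Q α R a :=
  vtxIdem_mul_arrClass (Q.alpha α) (inclFAalpha K Q α '' R) (Sum.inr a)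

theorem newArrClass_mul_vtxIdem (a : NewArrow Q α) :
    newArrClass Q α R a * vtxIdem K (Q.alpha α) (inclFAalpha K Q α '' R) a.src =
      newArrClass Q α R a :=
  arrClass_mul_vtxIdem (Q.alpha α) (inclFAalpha K Q α '' R) (Sum.inr a)

theorem newArrClass_mul_inclAlpha_mul_newArrClass {a₂ a₁ : NewArrow Q α}
    (h : ¬ Linked K Q α R a₂ a₁) (b : BQA K Q R) :
    newArrClass Q α R a₂ * inclAlpha Q α R b * newArrClass Q α R a₁ = 0 := by
  have hb : vtxIdem K Q R a₂.src * b * vtxIdem K Q R a₁.tgt = 0 := not_not.1 (not_exists.1 h b)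
  calc newArrClass Q α R a₂ * inclAlpha Q α R b * newArrClass Q α R a₁
      = newArrClass Q α R a₂ * inclAlpha Q α R (vtxIdem K Q R a₂.src * b * vtxIdem K Q R a₁.tgt) *
          newArrClass Q α R a₁ := by
        simp only [map_mul, inclAlpha_vtxIdem, ← mul_assoc, newArrClass_mul_vtxIdem]
        rw [mul_assoc (newArrClass Q α R a₂ * inclAlpha Q α R b), vtxIdem_mul_newArrClass]
    _ = 0 := by rw [hb, map_zero, mul_zero, zero_mul]

end Inclusion

section PathSpan

variable {K : Type} [Field K] (Q : QuiverData) (α : Q.V → Q.V → ℕ) (R : Set (FA K Q))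

def baseSubmodule : Submodule K (BQAalpha K Q α R) :=
  LinearMap.range (inclAlpha Q α R).toLinearMap

/-- `pathSpan [aₖ, …, a₁] = B aₖ B ⋯ B a₁ B`. -/
def pathSpan : List (NewArrow Q α) → Submodule K (BQAalpha K Q α R)
  | [] => baseSubmodule Q α R
  | a :: A => baseSubmodule Q α R * (K ∙ newArrClass Q α R a) * pathSpan A

theorem baseSubmodule_mul_self : baseSubmodule Q α R * baseSubmodule Q α R = baseSubmodule Q α R :=
  (Subalgebra.isIdempotentElem_toSubmodule (inclAlpha Q α R).range).eq

theorem baseSubmodule_mul_pathSpan (A : List (NewArrow Q α)) :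
    baseSubmodule Q α R * pathSpan Q α R A = pathSpan Q α R A := by
  cases A with
  | nil => exact baseSubmodule_mul_self Q α R
  | cons a A => simp only [pathSpan, ← mul_assoc, baseSubmodule_mul_self]

theorem pathSpan_mul_pathSpan_le (A A' : List (NewArrow Q α)) :
    pathSpan Q α R A * pathSpan Q α R A' ≤ pathSpan Q α R (A ++ A') := by
  induction A with
  | nil => exact (baseSubmodule_mul_pathSpan Q α R A').le
  | cons a A ih =>
    rw [List.cons_append, pathSpan, pathSpan, mul_assoc]
    exact mul_le_mul_right ih _

theorem span_newArrClass_mul_baseSubmodule_mul_eq_bot {a₂ a₁ : NewArrow Q α}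
    (h : ¬ Linked K Q α R a₂ a₁) :
    (K ∙ newArrClass Q α R a₂) * baseSubmodule Q α R * (K ∙ newArrClass Q α R a₁) = ⊥ := by
  rw [baseSubmodule, ← Submodule.span_eq (LinearMap.range _), Submodule.span_mul_span,
    Submodule.span_mul_span, Submodule.span_eq_bot]
  rintro _ ⟨_, ⟨_, rfl, _, ⟨b, rfl⟩, rfl⟩, _, rfl, rfl⟩
  exact newArrClass_mul_inclAlpha_mul_newArrClass Q α R h b

theorem pathSpan_eq_bot_of_not_isChain {A : List (NewArrow Q α)}
    (h : ¬ A.IsChain (Linked K Q α R)) : pathSpan Q α R A = ⊥ := by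
  induction A with
  | nil => exact absurd List.isChain_nil h
  | cons a A ih =>
    rcases A with _ | ⟨b, A⟩
    · exact absurd (List.isChain_singleton a) h
    rw [List.isChain_cons_cons, not_and_or] at h
    rcases h with hab | hA
    · have : pathSpan Q α R (a :: b :: A) = baseSubmodule Q α R *
          ((K ∙ newArrClass Q α R a) * baseSubmodule Q α R * (K ∙ newArrClass Q α R b)) *
            pathSpan Q α R A := by
        simp only [pathSpan, mul_assoc]
      rw [this, span_newArrClass_mul_baseSubmodule_mul_eq_bot Q α R hab, Submodule.mul_bot,
        Submodule.bot_mul]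
    · rw [pathSpan, ih hA, Submodule.mul_bot]

theorem pathSpan_fg [FiniteDimensional K (BQA K Q R)] (A : List (NewArrow Q α)) :
    (pathSpan Q α R A).FG := by
  have hbase : (baseSubmodule Q α R).FG := Submodule.fg_range _
  induction A with
  | nil => exact hbase
  | cons a A ih => exact (hbase.mul (Submodule.fg_span_singleton _)).mul ih

end PathSpan

section Bounded

variable {K : Type} [Field K] (Q : QuiverData) (α : Q.V → Q.V → ℕ) (R : Set (FA K Q))

theorem nonempty_relPath_of_isChain {A : List (NewArrow Q α)} {n : ℕ} (hA : A.length = n + 1)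
    (h : A.IsChain (Linked K Q α R)) : Nonempty (RelPath K Q α R n) := by
  have hrev := List.isChain_iff_getElem.1 (List.isChain_reverse.2 h)
  exact ⟨⟨fun i => A.reverse[i.val]'(by simp [hA]; omega), fun i => hrev i (by simp [hA])⟩⟩

def pathSpanUpTo (L : ℕ) : Submodule K (BQAalpha K Q α R) :=
  ⨆ A : {A : List (NewArrow Q α) // A.length ≤ L}, pathSpan Q α R A.1

theorem pathSpan_le_pathSpanUpTo {L : ℕ} {A : List (NewArrow Q α)} (hA : A.length ≤ L) :
    pathSpan Q α R A ≤ pathSpanUpTo Q α R L :=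
  le_iSup_of_le (ι := {A : List (NewArrow Q α) // A.length ≤ L}) ⟨A, hA⟩ le_rfl

theorem pathSpanUpTo_mul_le {L : ℕ} (hL : ∀ n : ℕ, Nonempty (RelPath K Q α R n) → n + 1 ≤ L) :
    pathSpanUpTo Q α R L * pathSpanUpTo Q α R L ≤ pathSpanUpTo Q α R L := by
  simp only [pathSpanUpTo, Submodule.iSup_mul, Submodule.mul_iSup, iSup_le_iff]
  rintro ⟨A', -⟩ ⟨A, -⟩
  refine (pathSpan_mul_pathSpan_le Q α R A A').trans ?_
  by_cases hlen : (A ++ A').length ≤ L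
  · exact pathSpan_le_pathSpanUpTo Q α R hlen
  by_cases hchain : (A ++ A').IsChain (Linked K Q α R)
  · have := hL _ (nonempty_relPath_of_isChain Q α R (n := (A ++ A').length - 1) (by omega) hchain)
    omega
  · rw [pathSpan_eq_bot_of_not_isChain Q α R hchain]
    exact bot_le

theorem pathSpanUpTo_eq_top {L : ℕ} (hL : ∀ n : ℕ, Nonempty (RelPath K Q α R n) → n + 1 ≤ L) :
    pathSpanUpTo Q α R L = ⊤ := by
  have hbase : baseSubmodule Q α R ≤ pathSpanUpTo Q α R L :=
    pathSpan_le_pathSpanUpTo Q α R (A := []) (Nat.zero_le L)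
  have hone : (1 : BQAalpha K Q α R) ∈ baseSubmodule Q α R := ⟨1, map_one (inclAlpha Q α R)⟩
  refine Submodule.eq_top_of_adjoin_eq_top (adjoin_range_mk_ι _ _) ?_ (hbase hone)
    (pathSpanUpTo_mul_le Q α R hL)
  rintro _ ⟨v | a | a, rfl⟩
  · exact hbase ⟨vtxIdem K Q R v, inclAlpha_vtxIdem Q α R v⟩
  · exact hbase ⟨arrClass Q R a, inclAlpha_arrClass Q α R a⟩
  · refine pathSpan_le_pathSpanUpTo Q α R (A := [a]) (hL 0 ⟨⟨fun _ => a, Fin.elim0⟩⟩)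
      (?_ : newArrClass Q α R a ∈ _)
    simpa [pathSpan] using Submodule.mul_mem_mul
      (Submodule.mul_mem_mul hone (Submodule.mem_span_singleton_self _)) hone

theorem finiteDimensional_of_relPath_bounded (hAdm : Admissible K Q R) {L : ℕ}
    (hL : ∀ n : ℕ, Nonempty (RelPath K Q α R n) → n + 1 ≤ L) :
    FiniteDimensional K (BQAalpha K Q α R) := by
  have := finiteDimensional_of_admissible Q R hAdm
  have : Finite {A : List (NewArrow Q α) // A.length ≤ L} := (List.finite_length_le _ L).to_subtype
  exact Module.finite_def.2 (pathSpanUpTo_eq_top Q α R hL ▸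
    Submodule.fg_iSup _ fun A => pathSpan_fg Q α R A.1)

end Bounded

section UniversalProperty

variable {K : Type} [Field K] (Q : QuiverData) (α : Q.V → Q.V → ℕ) (R : Set (FA K Q))
variable {A : Type*} [Semiring A] [Algebra K A] (φ : BQA K Q R →ₐ[K] A) (x : NewArrow Q α → A)

def liftAlphaGen : (Q.alpha α).V ⊕ (Q.alpha α).E → A :=
  Sum.elim (fun v => φ (vtxIdem K Q R v)) (Sum.elim (fun a => φ (arrClass Q R a)) x)

theorem lift_liftAlphaGen_comp_inclFAalpha :
    (FreeAlgebra.lift K (liftAlphaGen Q α R φ x)).comp (inclFAalpha K Q α) =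
      φ.comp (BQA.mk K Q R) := by
  ext (v | a) <;> simp [inclFAalpha, liftAlphaGen, vtxIdem, arrClass, QuiverData.vtx,
    QuiverData.arr] <;> rfl

theorem liftAlphaGen_rel (ht : ∀ a, φ (vtxIdem K Q R a.tgt) * x a = x a)
    (hs : ∀ a, x a * φ (vtxIdem K Q R a.src) = x a) ⦃y z : FA K (Q.alpha α)⦄
    (h : PathRel K (Q.alpha α) (inclFAalpha K Q α '' R) y z) :
    FreeAlgebra.lift K (liftAlphaGen Q α R φ x) y =
      FreeAlgebra.lift K (liftAlphaGen Q α R φ x) z := by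
  set F := FreeAlgebra.lift K (liftAlphaGen Q α R φ x)
  have hvtx (v : (Q.alpha α).V) : F ((Q.alpha α).vtx K v) = φ (vtxIdem K Q R v) :=
    FreeAlgebra.lift_ι_apply _ _
  have harr (a : Q.E) : F ((Q.alpha α).arr K (Sum.inl a)) = φ (arrClass Q R a) :=
    FreeAlgebra.lift_ι_apply _ _
  have hnew (a : NewArrow Q α) : F ((Q.alpha α).arr K (Sum.inr a)) = x a :=
    FreeAlgebra.lift_ι_apply _ _
  induction h with
  | vtx_mul i j =>
    rw [map_mul, hvtx, hvtx, ← map_mul]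
    erw [vtxIdem_mul_vtxIdem]
    rw [apply_ite φ, apply_ite F, hvtx, map_zero, map_zero]
    rfl
  | vtx_sum =>
    rw [map_sum, map_one]
    simp only [hvtx]
    exact (map_sum φ _ _).symm.trans ((congrArg φ (sum_vtxIdem Q R)).trans (map_one φ))
  | arr_t a =>
    rcases a with a | a
    · rw [map_mul, hvtx, harr, ← map_mul]
      exact congrArg φ (vtxIdem_mul_arrClass Q R a)
    · rw [map_mul, hvtx, hnew]
      exact ht a
  | arr_s a =>
    rcases a with a | a
    · rw [map_mul, hvtx, harr, ← map_mul]
      exact congrArg φ (arrClass_mul_vtxIdem Q R a)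
    · rw [map_mul, hvtx, hnew]
      exact hs a
  | rel r hr =>
    obtain ⟨r, hr, rfl⟩ := hr
    rw [map_zero, ← AlgHom.comp_apply, lift_liftAlphaGen_comp_inclFAalpha, AlgHom.comp_apply,
      mk_eq_zero_of_mem Q R hr, map_zero]

def liftAlpha (ht : ∀ a, φ (vtxIdem K Q R a.tgt) * x a = x a)
    (hs : ∀ a, x a * φ (vtxIdem K Q R a.src) = x a) : BQAalpha K Q α R →ₐ[K] A :=
  RingQuot.liftAlgHom K
    ⟨FreeAlgebra.lift K (liftAlphaGen Q α R φ x), liftAlphaGen_rel Q α R φ x ht hs⟩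

variable {φ x} (ht : ∀ a, φ (vtxIdem K Q R a.tgt) * x a = x a)
  (hs : ∀ a, x a * φ (vtxIdem K Q R a.src) = x a)

theorem liftAlpha_inclAlpha (b : BQA K Q R) :
    liftAlpha Q α R φ x ht hs (inclAlpha Q α R b) = φ b := by
  obtain ⟨y, rfl⟩ := RingQuot.mkAlgHom_surjective K _ b
  rw [← BQA.mk, inclAlpha_mk, BQA.mk, liftAlpha, RingQuot.liftAlgHom_mkAlgHom_apply,
    ← AlgHom.comp_apply, lift_liftAlphaGen_comp_inclFAalpha, AlgHom.comp_apply]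

theorem liftAlpha_newArrClass (a : NewArrow Q α) :
    liftAlpha Q α R φ x ht hs (newArrClass Q α R a) = x a := by
  unfold newArrClass arrClass
  rw [BQA.mk, liftAlpha, RingQuot.liftAlgHom_mkAlgHom_apply]
  exact FreeAlgebra.lift_ι_apply _ _

end UniversalProperty

section ChainRepresentation

variable {K : Type} [Field K] (Q : QuiverData) (α : Q.V → Q.V → ℕ) (R : Set (FA K Q))
variable {n : ℕ} (A : Fin (n + 1) → NewArrow Q α) (μ : Fin (n + 1) → (BQA K Q R →ₗ[K] K))

def arrowShift (a : NewArrow Q α) : Module.End K (Fin (n + 2) → BQA K Q R) :=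
  LinearMap.pi (Fin.cases 0 fun i => if A i = a then
    ((μ i ∘ₗ LinearMap.mulLeft K (vtxIdem K Q R a.src) ∘ₗ LinearMap.proj i.castSucc).smulRight
      (vtxIdem K Q R a.tgt)) else 0)

theorem arrowShift_apply_zero (a : NewArrow Q α) (m : Fin (n + 2) → BQA K Q R) :
    arrowShift Q α R A μ a m 0 = 0 := rfl

theorem arrowShift_apply_succ (a : NewArrow Q α) (m : Fin (n + 2) → BQA K Q R) (i : Fin (n + 1)) :
    arrowShift Q α R A μ a m i.succ =
      if A i = a then μ i (vtxIdem K Q R a.src * m i.castSucc) • vtxIdem K Q R a.tgt else 0 := by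
  simp only [arrowShift, LinearMap.pi_apply, Fin.cases_succ]
  split_ifs <;> rfl

theorem vtxIdem_smul_arrowShift (a : NewArrow Q α) :
    Algebra.lsmul K K _ (vtxIdem K Q R a.tgt) * arrowShift Q α R A μ a =
      arrowShift Q α R A μ a := by
  refine LinearMap.ext fun m => funext fun c => ?_
  cases c using Fin.cases with
  | zero => simp [arrowShift_apply_zero]
  | succ i =>
    simp only [Module.End.mul_apply, Algebra.lsmul_coe, Pi.smul_apply, smul_eq_mul,
      arrowShift_apply_succ]
    split_ifs <;> simp [vtxIdem_mul_self]

theorem arrowShift_mul_vtxIdem_smul (a : NewArrow Q α) :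
    arrowShift Q α R A μ a * Algebra.lsmul K K _ (vtxIdem K Q R a.src) =
      arrowShift Q α R A μ a := by
  refine LinearMap.ext fun m => funext fun c => ?_
  cases c using Fin.cases with
  | zero => simp [arrowShift_apply_zero]
  | succ i =>
    simp only [Module.End.mul_apply, Algebra.lsmul_coe, Pi.smul_apply, smul_eq_mul,
      arrowShift_apply_succ, ← mul_assoc, vtxIdem_mul_self]

theorem arrowShift_single (j : Fin (n + 1)) (v : BQA K Q R) :
    arrowShift Q α R A μ (A j) (Pi.single j.castSucc v) =
      Pi.single j.succ (μ j (vtxIdem K Q R (A j).src * v) • vtxIdem K Q R (A j).tgt) := by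
  ext c
  cases c using Fin.cases with
  | zero => simp [arrowShift_apply_zero]
  | succ i =>
    rw [arrowShift_apply_succ]
    by_cases hij : i = j
    · subst hij; simp
    · simp [Pi.single_eq_of_ne ((Fin.succ_injective _).ne hij),
        Pi.single_eq_of_ne ((Fin.castSucc_injective _).ne hij)]

def chainRep : BQAalpha K Q α R →ₐ[K] Module.End K (Fin (n + 2) → BQA K Q R) :=
  liftAlpha Q α R (Algebra.lsmul K K _) (arrowShift Q α R A μ)
    (vtxIdem_smul_arrowShift Q α R A μ) (arrowShift_mul_vtxIdem_smul Q α R A μ)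

end ChainRepresentation

section LinearIndependence

variable {K : Type} [Field K] (Q : QuiverData) (α : Q.V → Q.V → ℕ) (R : Set (FA K Q))
variable {n : ℕ} (A : Fin (n + 1) → NewArrow Q α) (b : Fin n → BQA K Q R)

/-- `chainProd A b j = a_j b_{j-1} a_{j-1} ⋯ b_0 a_0` in `B^α`, where `a_i = A i`. -/
def chainProd : Fin (n + 1) → BQAalpha K Q α R :=
  Fin.induction (newArrClass Q α R (A 0))
    fun i z => newArrClass Q α R (A i.succ) * inclAlpha Q α R (b i) * z

theorem chainProd_zero : chainProd Q α R A b 0 = newArrClass Q α R (A 0) :=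
  Fin.induction_zero _ _

theorem chainProd_succ (i : Fin n) :
    chainProd Q α R A b i.succ =
      newArrClass Q α R (A i.succ) * inclAlpha Q α R (b i) * chainProd Q α R A b i.castSucc :=
  Fin.induction_succ _ _ _

theorem chainRep_chainProd (μ : Fin (n + 1) → (BQA K Q R →ₗ[K] K))
    (hμ₀ : μ 0 (vtxIdem K Q R (A 0).src) = 1)
    (hμ : ∀ i : Fin n,
      μ i.succ (vtxIdem K Q R (A i.succ).src * (b i * vtxIdem K Q R (A i.castSucc).tgt)) = 1)
    (j : Fin (n + 1)) :
    chainRep Q α R A μ (chainProd Q α R A b j) (Pi.single 0 (vtxIdem K Q R (A 0).src)) =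
      Pi.single j.succ (vtxIdem K Q R (A j).tgt) := by
  induction j using Fin.induction with
  | zero =>
    rw [chainProd_zero, chainRep, liftAlpha_newArrClass]
    exact (arrowShift_single Q α R A μ 0 _).trans (by rw [vtxIdem_mul_self, hμ₀, one_smul])
  | succ i ih =>
    rw [chainProd_succ, map_mul, map_mul, Module.End.mul_apply, Module.End.mul_apply, ih]
    rw [chainRep, liftAlpha_inclAlpha, liftAlpha_newArrClass, Algebra.lsmul_coe]
    dsimp only
    rw [← Pi.single_smul', smul_eq_mul, Fin.succ_castSucc, arrowShift_single, hμ, one_smul]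

theorem linearIndependent_chainProd (hvtx : ∀ v, vtxIdem K Q R v ≠ 0)
    (hb : ∀ i : Fin n, vtxIdem K Q R (A i.succ).src * b i * vtxIdem K Q R (A i.castSucc).tgt ≠ 0) :
    LinearIndependent K (chainProd Q α R A b) := by
  let w : Fin (n + 1) → BQA K Q R := Fin.cons (vtxIdem K Q R (A 0).src)
    fun i => vtxIdem K Q R (A i.succ).src * (b i * vtxIdem K Q R (A i.castSucc).tgt)
  have hw (j : Fin (n + 1)) : w j ≠ 0 := by
    cases j using Fin.cases with
    | zero => exact hvtx _
    | succ i => simpa [w, mul_assoc] using hb i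
  choose μ hμ using fun j => Module.Projective.exists_dual_eq_one K (hw j)
  let u : Fin (n + 2) → BQA K Q R := Fin.cons (vtxIdem K Q R (A 0).src)
    fun j => vtxIdem K Q R (A j).tgt
  have hu (j : Fin (n + 2)) : u j ≠ 0 := by
    cases j using Fin.cases <;> simp [u, hvtx]
  let E := LinearMap.applyₗ (R := K) (Pi.single 0 (vtxIdem K Q R (A 0).src)) ∘ₗ
    (chainRep Q α R A μ).toLinearMap
  have hE : E ∘ chainProd Q α R A b = (fun j => Pi.single j (u j)) ∘ Fin.succ :=
    funext fun j => by
      simpa [E, u] using chainRep_chainProd Q α R A b μ (by simpa [w] using hμ 0)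
        (fun i => by simpa [w] using hμ i.succ) j
  refine LinearIndependent.of_comp E ?_
  rw [hE]
  exact (Pi.linearIndependent_single_of_ne_zero hu).comp _ (Fin.succ_injective _)

theorem RelPath.succ_le_finrank (hR : RelationsOK K Q R) [FiniteDimensional K (BQAalpha K Q α R)]
    (γ : RelPath K Q α R n) : n + 1 ≤ Module.finrank K (BQAalpha K Q α R) := by
  choose b hb using γ.linked
  simpa using (linearIndependent_chainProd Q α R γ.arr b (vtxIdem_ne_zero Q R hR) hb)
    |>.fintype_card_le_finrank

end LinearIndependence

section Cycles

open Fin.NatCast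

variable {K : Type} [Field K] {Q : QuiverData} {α : Q.V → Q.V → ℕ} {R : Set (FA K Q)}

def RelPath.segment {n : ℕ} (γ : RelPath K Q α R n) (i k : ℕ) (h : i + k ≤ n) :
    RelPath K Q α R k where
  arr j := γ.arr ⟨i + j, by omega⟩
  linked j := γ.linked ⟨i + j, by omega⟩

theorem RelPath.IsCycle.linked_add_one {n : ℕ} {γ : RelPath K Q α R n} (hc : γ.IsCycle)
    (b : Fin (n + 1)) : Linked K Q α R (γ.arr (b + 1)) (γ.arr b) := by
  induction b using Fin.lastCases with
  | last => rw [Fin.last_add_one]; exact hc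
  | cast i => simpa [Fin.coeSucc_eq_succ] using γ.linked i

theorem RelPath.IsCycle.nonempty_relPath {n : ℕ} {γ : RelPath K Q α R n} (hc : γ.IsCycle)
    (m : ℕ) : Nonempty (RelPath K Q α R m) :=
  ⟨⟨fun j => γ.arr ((j : ℕ) : Fin (n + 1)), fun j => by
    simpa using hc.linked_add_one ((j : ℕ) : Fin (n + 1))⟩⟩

theorem RelPath.arr_injective (h : ¬ ∃ (m : ℕ) (δ : RelPath K Q α R m), δ.IsCycle) {n : ℕ}
    (γ : RelPath K Q α R n) : Function.Injective γ.arr := by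
  suffices key : ∀ i j : Fin (n + 1), i < j → γ.arr i ≠ γ.arr j by
    intro i j hij
    by_contra hne
    rcases lt_or_gt_of_ne hne with hlt | hlt
    exacts [key i j hlt hij, key j i hlt hij.symm]
  intro i j hlt hij
  have hj : (⟨j - 1, by omega⟩ : Fin n).succ = j := Fin.ext (by simp; omega)
  refine h ⟨_, γ.segment i (j - i - 1) (by omega), ?_⟩
  have := γ.linked ⟨j - 1, by omega⟩
  rw [hj, ← hij] at this
  show Linked K Q α R (γ.arr _) (γ.arr _)
  convert this using 3 <;> simp
  omega

theorem exists_relPath_bound_iff_not_exists_isCycle :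
    (∃ L : ℕ, ∀ n : ℕ, Nonempty (RelPath K Q α R n) → n + 1 ≤ L) ↔
      ¬ ∃ (n : ℕ) (γ : RelPath K Q α R n), γ.IsCycle := by
  constructor
  · rintro ⟨L, hL⟩ ⟨n, γ, hc⟩
    have := hL L (hc.nonempty_relPath L)
    omega
  · intro h
    exact ⟨Fintype.card (NewArrow Q α), fun n ⟨γ⟩ => by
      simpa using Fintype.card_le_of_injective _ (γ.arr_injective h)⟩

end Cycles

theorem finiteDimensional_alpha_iff_bounded_iff_no_relative_cycles
    (K : Type) [Field K] (Q : QuiverData) (R : Set (FA K Q))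
    (hBound : BoundQuiverAlgebra K Q R) (α : Q.V → Q.V → ℕ) :
    (FiniteDimensional K (BQAalpha K Q α R) ↔
      ∃ L : ℕ, ∀ n : ℕ, Nonempty (RelPath K Q α R n) → n + 1 ≤ L) ∧
    ((∃ L : ℕ, ∀ n : ℕ, Nonempty (RelPath K Q α R n) → n + 1 ≤ L) ↔
      ¬ ∃ (n : ℕ) (γ : RelPath K Q α R n), γ.IsCycle) := by
  obtain ⟨-, hR, hAdm⟩ := hBound
  refine ⟨⟨fun _ => ?_, fun ⟨L, hL⟩ => finiteDimensional_of_relPath_bounded Q α R hAdm hL⟩,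
    exists_relPath_bound_iff_not_exists_isCycle⟩
  exact ⟨Module.finrank K (BQAalpha K Q α R), fun n ⟨γ⟩ => γ.succ_le_finrank Q α R hR⟩
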